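/- arXiv:2601.08453 — 4 statements merged into one kernel-verified Lean document; each statement's English description precedes it below -/
import Mathlib

section
/- Let r, m be positive integers. Then the m-fold convolution g_r^{*m} of g_r with itself satisfies g_r^{*m}(x) = ((r!)^m/(mr−1)!) · (m−x)^{mr−1} for all x ∈ [m−1, m]. -/
/-!
On `[m, m + 1]` only `t ∈ [x - m, 1]` contributes to `∫ g_r^{*m}(x - t) g_r(t) dt`, since `g_r`
vanishes above `1` and `g_r^{*m}` vanishes above `m`; there `x - t ∈ [m - 1, m]`, so by induction
the integrand is a multiple of `(t - (x - m))^{mr-1} (1 - t)^{r-1}`, whose integral over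
`[x - m, 1]` is a Beta integral `(b - a)^{p+q+1} p! q! / (p+q+1)!`.
-/

/-- density of the Beta(1,r) distribution: `r (1-x)^(r-1)` on `[0,1]`, `0` elsewhere. -/
noncomputable def gdens (r : ℕ) : ℝ → ℝ :=
  fun x => if x ∈ Set.Icc (0 : ℝ) 1 then (r : ℝ) * (1 - x) ^ (r - 1) else 0

open MeasureTheory in
/-- `iterConv f m` is the `m`-fold convolution `f^{*m}`: `f^{*1} = f` and
`f^{*(m+1)}(x) = ∫ t, f^{*m}(x - t) * f t` (junk value `0` at `m = 0`). -/
noncomputable def iterConv (f : ℝ → ℝ) : ℕ → ℝ → ℝ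
  | 0 => fun _ => 0
  | 1 => f
  | (n+2) => fun x => ∫ t : ℝ, iterConv f (n+1) (x - t) * f t

open MeasureTheory Set

theorem integral_sub_pow_mul_sub_pow_succ (a b : ℝ) (p q : ℕ) :
    (p + 1) * ∫ x in a..b, (x - a) ^ p * (b - x) ^ (q + 1)
      = (q + 1) * ∫ x in a..b, (x - a) ^ (p + 1) * (b - x) ^ q := by
  have hu : ∀ x ∈ uIcc a b,
      HasDerivAt (fun y => (b - y) ^ (q + 1)) (-((q + 1) * (b - x) ^ q)) x := fun x _ => by
    simpa using ((hasDerivAt_id x).const_sub b).fun_pow (q + 1)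
  have hv : ∀ x ∈ uIcc a b,
      HasDerivAt (fun y => (y - a) ^ (p + 1)) ((p + 1) * (x - a) ^ p) x := fun x _ => by
    simpa using ((hasDerivAt_id x).sub_const a).fun_pow (p + 1)
  have ibp := intervalIntegral.integral_mul_deriv_eq_deriv_mul hu hv
    (Continuous.intervalIntegrable (by fun_prop) a b)
    (Continuous.intervalIntegrable (by fun_prop) a b)
  simp only [sub_self, zero_pow (Nat.succ_ne_zero _), zero_mul, mul_zero, zero_sub] at ibp
  rw [← intervalIntegral.integral_const_mul, ← intervalIntegral.integral_const_mul]
  convert ibp using 1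
  · congr 1; ext x; ring
  · rw [← intervalIntegral.integral_neg]; congr 1; ext x; ring

theorem integral_sub_pow_mul_sub_pow (a b : ℝ) (p q : ℕ) :
    ∫ x in a..b, (x - a) ^ p * (b - x) ^ q
      = (b - a) ^ (p + q + 1) * p.factorial * q.factorial / (p + q + 1).factorial := by
  induction q generalizing p with
  | zero =>
    simp only [pow_zero, mul_one, add_zero, Nat.factorial_zero, Nat.cast_one]
    rw [intervalIntegral.integral_comp_sub_right (· ^ p), integral_pow, sub_self,
      zero_pow p.succ_ne_zero, sub_zero, Nat.factorial_succ]
    push_cast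
    field_simp
  | succ q ih =>
    have h := integral_sub_pow_mul_sub_pow_succ a b p q
    rw [ih (p + 1), show p + 1 + q + 1 = p + (q + 1) + 1 by omega] at h
    rw [Nat.factorial_succ p] at h
    rw [Nat.factorial_succ q]
    push_cast at h ⊢
    apply mul_left_cancel₀ (by positivity : (p : ℝ) + 1 ≠ 0)
    rw [h]
    ring

theorem iterConv_succ (f : ℝ → ℝ) {m : ℕ} (hm : m ≠ 0) (x : ℝ) :
    iterConv f (m + 1) x = ∫ t, iterConv f m (x - t) * f t := by
  obtain ⟨n, rfl⟩ := Nat.exists_eq_add_one_of_ne_zero hm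
  rfl

theorem iterConv_eq_zero_of_lt {f : ℝ → ℝ} (hf : ∀ t, 1 < t → f t = 0) :
    ∀ (m : ℕ) {x : ℝ}, (m : ℝ) < x → iterConv f m x = 0
  | 0, _, _ => rfl
  | 1, x, hx => hf x (by simpa using hx)
  | n + 2, x, hx => by
    rw [iterConv_succ f n.succ_ne_zero]
    refine integral_eq_zero_of_ae (.of_forall fun t => ?_)
    simp only [Pi.zero_apply]
    rcases le_or_gt t 1 with ht | ht
    · rw [iterConv_eq_zero_of_lt hf (n + 1) (x := x - t) (by push_cast at hx ⊢; linarith),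
        zero_mul]
    · rw [hf t ht, mul_zero]

theorem integral_comp_sub_mul_eq_intervalIntegral {f h : ℝ → ℝ} {a x : ℝ}
    (hf : ∀ t, 1 < t → f t = 0) (hh : ∀ y, a < y → h y = 0) (hx : x ≤ a + 1) :
    ∫ t, h (x - t) * f t = ∫ t in (x - a)..1, h (x - t) * f t := by
  rw [intervalIntegral.integral_of_le (by linarith), ← integral_Icc_eq_integral_Ioc,
    ← integral_indicator measurableSet_Icc]
  congr 1 with t
  by_cases ht : t ∈ Icc (x - a) 1
  · rw [indicator_of_mem ht]
  · rw [indicator_of_notMem ht]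
    rcases not_and_or.mp ht with ht | ht
    · rw [hh _ (by linarith [not_le.mp ht]), zero_mul]
    · rw [hf t (not_le.mp ht), mul_zero]

theorem gdens_of_mem {r : ℕ} {x : ℝ} (hx : x ∈ Icc 0 1) : gdens r x = r * (1 - x) ^ (r - 1) :=
  if_pos hx

theorem gdens_of_one_lt (r : ℕ) {x : ℝ} (hx : 1 < x) : gdens r x = 0 :=
  if_neg fun h => hx.not_ge h.2

theorem iterConv_gdens_succ {r m : ℕ} (hr : 0 < r) (hm : 0 < m)
    (ih : ∀ y ∈ Icc ((m : ℝ) - 1) m,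
      iterConv (gdens r) m y
        = (r.factorial : ℝ) ^ m / (m * r - 1).factorial * (m - y) ^ (m * r - 1))
    {x : ℝ} (hx : x ∈ Icc (m : ℝ) (m + 1)) :
    iterConv (gdens r) (m + 1) x
      = (r.factorial : ℝ) ^ (m + 1) / ((m + 1) * r - 1).factorial
        * (m + 1 - x) ^ ((m + 1) * r - 1) := by
  set k := m * r - 1
  have hint : EqOn (fun t => iterConv (gdens r) m (x - t) * gdens r t)
      (fun t => (r.factorial : ℝ) ^ m / k.factorial * r * ((t - (x - m)) ^ k * (1 - t) ^ (r - 1)))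
      (uIcc (x - m) 1) := by
    intro t ht
    rw [uIcc_of_le (by linarith [hx.2])] at ht
    dsimp only
    rw [ih (x - t) ⟨by linarith [hx.1, ht.2], by linarith [ht.1]⟩,
      gdens_of_mem ⟨by linarith [hx.1, ht.1], ht.2⟩]
    ring
  rw [iterConv_succ _ hm.ne',
    integral_comp_sub_mul_eq_intervalIntegral (fun t => gdens_of_one_lt r)
      (fun y => iterConv_eq_zero_of_lt (fun t => gdens_of_one_lt r) _) hx.2,
    intervalIntegral.integral_congr hint, intervalIntegral.integral_const_mul,
    integral_sub_pow_mul_sub_pow]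
  have hdeg : k + (r - 1) + 1 = (m + 1) * r - 1 := by
    have : 1 ≤ m * r := Nat.one_le_iff_ne_zero.mpr (by positivity)
    rw [add_mul, one_mul]; omega
  have hfac : (r.factorial : ℝ) = r * (r - 1).factorial :=
    mod_cast (Nat.mul_factorial_pred hr.ne').symm
  rw [hdeg, hfac]
  field_simp
  ring

theorem stmt_7 (r m : ℕ) (hr : 0 < r) (hm : 0 < m) :
    ∀ x ∈ Set.Icc ((m : ℝ) - 1) (m : ℝ),
      iterConv (gdens r) m x =
        (r.factorial : ℝ) ^ m / ((m * r - 1).factorial : ℝ) * ((m : ℝ) - x) ^ (m * r - 1) := by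
  induction m, hm using Nat.le_induction with
  | base =>
    intro x hx
    simp only [Nat.succ_eq_add_one, zero_add, Nat.cast_one, sub_self, one_mul, pow_one] at hx ⊢
    rw [iterConv, gdens_of_mem hx, ← Nat.mul_factorial_pred hr.ne']
    push_cast
    field_simp
  | succ m hm ih =>
    intro x hx
    push_cast at hx ⊢
    exact iterConv_gdens_succ hr hm ih ⟨by linarith [hx.1], hx.2⟩
end

section
/- Let r, m be positive integers and k a natural number. Then M_r(k,m) ≤ ((r!)^m/(mr−1)!) · ∫_0^m x^k (m−x)^{mr−1} dx = k!·(r!)^m·m^{k+rm}/(k+mr)!. -/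
/-
Expanding `(x₁ + ⋯ + x_m) ^ k` by the multinomial theorem and integrating coordinatewise with
the Beta integral `∫₀¹ t ^ j (1 - t) ^ (r - 1) = j! (r - 1)! / (j + r)!` gives
`M_r(k, m) = k! (r!) ^ m ∑_{|c| = k} ∏ᵢ 1 / (cᵢ + r)!`. With `N = k + m r`, each summand is
`multinomial (c + r) / N!`, and the shifted tuples `c + r` are distinct compositions of `N`, so
the sum is at most `∑_{|d| = N} multinomial d / N! = m ^ N / N!`. The integral on the right-hand
side is a rescaled Beta integral, which gives the closed form.
-/

open MeasureTheory in
/-- `momentM r m k` is the `k`-th moment of the sum of `m` i.i.d. Beta(1,r) random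
variables, written as an integral over the cube `[0,1]^m`. -/
noncomputable def momentM (r m k : ℕ) : ℝ :=
  ∫ x in Set.Icc (0 : Fin m → ℝ) 1,
    (∑ i, x i) ^ k * ∏ i, (r : ℝ) * (1 - x i) ^ (r - 1)

open MeasureTheory Finset Nat

theorem integral_pow_mul_one_sub_pow (a b : ℕ) :
    ∫ x in (0 : ℝ)..1, x ^ a * (1 - x) ^ b = (a ! * b ! : ℝ) / (a + b + 1)! := by
  have h := Complex.betaIntegral_eq_Gamma_mul_div (a + 1) (b + 1)
    (by norm_cast; omega) (by norm_cast; omega)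
  rw [Complex.betaIntegral,
    show (a + 1 : ℂ) + (b + 1) = ((a + b + 1 : ℕ) : ℂ) + 1 by push_cast; ring] at h
  simp only [add_sub_cancel_right, Complex.cpow_natCast, Complex.Gamma_nat_eq_factorial] at h
  apply Complex.ofReal_injective
  push_cast [← intervalIntegral.integral_ofReal]
  exact h

theorem integral_pow_mul_sub_pow (M : ℝ) (a b : ℕ) :
    ∫ x in (0 : ℝ)..M, x ^ a * (M - x) ^ b
      = M ^ (a + b + 1) * ((a ! * b ! : ℝ) / (a + b + 1)!) := by
  have hscale := intervalIntegral.smul_integral_comp_mul_left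
    (fun x => x ^ a * (M - x) ^ b) M (a := 0) (b := 1)
  rw [mul_zero, mul_one] at hscale
  calc ∫ x in (0 : ℝ)..M, x ^ a * (M - x) ^ b
      = M * ∫ x in (0 : ℝ)..1, M ^ (a + b) * (x ^ a * (1 - x) ^ b) := by
        rw [← hscale, smul_eq_mul]
        congr 1
        refine intervalIntegral.integral_congr fun x _ => ?_
        simp only [← mul_one_sub, mul_pow]
        ring
    _ = M ^ (a + b + 1) * ((a ! * b ! : ℝ) / (a + b + 1)!) := by
        rw [intervalIntegral.integral_const_mul, integral_pow_mul_one_sub_pow]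
        ring

theorem setIntegral_Icc_pow_mul_natCast_mul_one_sub_pow {r : ℕ} (hr : 0 < r) (j : ℕ) :
    ∫ t in Set.Icc (0 : ℝ) 1, t ^ j * ((r : ℝ) * (1 - t) ^ (r - 1))
      = (j ! * r ! : ℝ) / (j + r)! := by
  obtain ⟨s, rfl⟩ := Nat.exists_eq_add_one_of_ne_zero hr.ne'
  rw [integral_Icc_eq_integral_Ioc, ← intervalIntegral.integral_of_le zero_le_one]
  simp only [mul_left_comm _ ((s + 1 : ℕ) : ℝ), intervalIntegral.integral_const_mul,
    Nat.add_sub_cancel, integral_pow_mul_one_sub_pow, Nat.factorial_succ, ← add_assoc]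
  push_cast
  ring

theorem setIntegral_Icc_pi_prod {ι : Type*} [Fintype ι] (F : ι → ℝ → ℝ) (a b : ι → ℝ) :
    ∫ x in Set.Icc a b, ∏ i, F i (x i) = ∏ i, ∫ t in Set.Icc (a i) (b i), F i t := by
  rw [← Set.pi_univ_Icc, volume_pi, Measure.restrict_pi_pi, integral_fintype_prod_eq_prod]

theorem multinomial_mul_prod_factorial_div {ι : Type*} [Fintype ι] [DecidableEq ι]
    {k : ℕ} (r : ℕ) {c : ι → ℕ} (hc : c ∈ piAntidiag univ k) :
    (multinomial univ c : ℝ) * ∏ i, ((c i)! * r ! : ℝ) / (c i + r)!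
      = k ! * (r ! : ℝ) ^ Fintype.card ι * (∏ i, ((c i + r)! : ℝ))⁻¹ := by
  have hspec := multinomial_spec univ c
  rw [(mem_piAntidiag.1 hc).1] at hspec
  rw [prod_div_distrib, prod_mul_distrib, prod_const, Finset.card_univ, ← hspec]
  push_cast
  ring

theorem momentM_eq_sum {r : ℕ} (hr : 0 < r) (m k : ℕ) :
    momentM r m k = k ! * (r ! : ℝ) ^ m *
      ∑ c ∈ piAntidiag (univ : Finset (Fin m)) k, (∏ i, ((c i + r)! : ℝ))⁻¹ := by
  have hexpand (x : Fin m → ℝ) : (∑ i, x i) ^ k * ∏ i, (r : ℝ) * (1 - x i) ^ (r - 1)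
      = ∑ c ∈ piAntidiag univ k,
          (multinomial univ c : ℝ) * ∏ i, (x i ^ c i * ((r : ℝ) * (1 - x i) ^ (r - 1))) := by
    rw [sum_pow_eq_sum_piAntidiag, sum_mul]
    exact sum_congr rfl fun c _ => by rw [mul_assoc, ← prod_mul_distrib]
  have hint (c : Fin m → ℕ) : IntegrableOn (fun x : Fin m → ℝ =>
      (multinomial univ c : ℝ) * ∏ i, (x i ^ c i * ((r : ℝ) * (1 - x i) ^ (r - 1))))
      (Set.Icc 0 1) :=
    Continuous.integrableOn_Icc (by fun_prop)
  calc momentM r m k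
      = ∑ c ∈ piAntidiag univ k, (multinomial univ c : ℝ) *
          ∏ i, ∫ t in Set.Icc (0 : ℝ) 1, t ^ c i * ((r : ℝ) * (1 - t) ^ (r - 1)) := by
        simp only [momentM, hexpand]
        rw [integral_finsetSum _ fun c _ => hint c]
        refine sum_congr rfl fun c _ => ?_
        rw [integral_const_mul,
          setIntegral_Icc_pi_prod fun i t => t ^ c i * ((r : ℝ) * (1 - t) ^ (r - 1))]
        rfl
    _ = _ := by
        simp only [setIntegral_Icc_pow_mul_natCast_mul_one_sub_pow hr, mul_sum]
        refine sum_congr rfl fun c hc => ?_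
        rw [multinomial_mul_prod_factorial_div r hc, Fintype.card_fin]

theorem sum_piAntidiag_inv_prod_factorial_add_le {ι : Type*} [Fintype ι] [DecidableEq ι]
    (r k : ℕ) :
    ∑ c ∈ piAntidiag (univ : Finset ι) k, (∏ i, ((c i + r)! : ℝ))⁻¹
      ≤ (Fintype.card ι : ℝ) ^ (k + Fintype.card ι * r) / (k + Fintype.card ι * r)! := by
  set N := k + Fintype.card ι * r
  let shift : (ι → ℕ) ↪ (ι → ℕ) := addRightEmbedding fun _ => r
  have hshift : (piAntidiag univ k).map shift ⊆ piAntidiag univ N := by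
    intro d hd
    obtain ⟨c, hc, rfl⟩ := mem_map.1 hd
    simp [shift, sum_add_distrib, (mem_piAntidiag.1 hc).1, N]
  have hterm (c : ι → ℕ) (hc : c ∈ piAntidiag univ k) :
      (∏ i, ((c i + r)! : ℝ))⁻¹ = multinomial univ (shift c) / N ! := by
    have hspec := multinomial_spec univ (shift c)
    rw [mem_piAntidiag.1 (hshift (mem_map_of_mem shift hc)) |>.1] at hspec
    rw [← hspec, Nat.cast_mul, Nat.cast_prod,
      div_mul_cancel_right₀ (Nat.cast_pos.2 (multinomial_pos univ (shift c))).ne']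
    rfl
  have hpow : (Fintype.card ι : ℝ) ^ N
      = ∑ d ∈ piAntidiag (univ : Finset ι) N, (multinomial univ d : ℝ) := by
    simpa using sum_pow_eq_sum_piAntidiag (univ : Finset ι) (fun _ => (1 : ℝ)) N
  rw [sum_congr rfl hterm, ← sum_div, hpow]
  gcongr
  rw [← sum_map (piAntidiag univ k) shift fun d => (multinomial univ d : ℝ)]
  exact sum_le_sum_of_subset_of_nonneg hshift fun _ _ _ => by positivity

theorem stmt_9 (r m : ℕ) (hr : 0 < r) (hm : 0 < m) (k : ℕ) :
    momentM r m k ≤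
        (r.factorial : ℝ) ^ m / ((m * r - 1).factorial : ℝ) *
          ∫ x in (0 : ℝ)..(m : ℝ), x ^ k * ((m : ℝ) - x) ^ (m * r - 1) ∧
      (r.factorial : ℝ) ^ m / ((m * r - 1).factorial : ℝ) *
          ∫ x in (0 : ℝ)..(m : ℝ), x ^ k * ((m : ℝ) - x) ^ (m * r - 1) =
        (k.factorial : ℝ) * (r.factorial : ℝ) ^ m * (m : ℝ) ^ (k + r * m) /
          ((k + m * r).factorial : ℝ) := by
  have hmr : k + (m * r - 1) + 1 = k + m * r := by
    rw [add_assoc, Nat.sub_add_cancel (Nat.mul_pos hm hr)]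
  have hclosed : (r ! : ℝ) ^ m / (m * r - 1)! *
      ∫ x in (0 : ℝ)..(m : ℝ), x ^ k * ((m : ℝ) - x) ^ (m * r - 1) =
        k ! * (r ! : ℝ) ^ m * (m : ℝ) ^ (k + r * m) / (k + m * r)! := by
    rw [integral_pow_mul_sub_pow, hmr, mul_comm r m]
    field_simp
  refine ⟨?_, hclosed⟩
  rw [hclosed, momentM_eq_sum hr, mul_comm r m, mul_div_assoc]
  gcongr
  simpa using sum_piAntidiag_inv_prod_factorial_add_le (ι := Fin m) r k
end

section
/- Let m, r be positive integers. Then S_r(p,m) is asymptotically equivalent to m^p/m! as p → ∞; that is, lim_{p→∞} (m! · S_r(p,m))/m^p = 1. -/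
/-- `stirlingAssoc r p m` is the `r`-associated Stirling number of the second kind:
the number of partitions of `{1,…,p}` into exactly `m` parts, each of size at least `r`. -/
noncomputable def stirlingAssoc (r p m : ℕ) : ℕ :=
  Nat.card {P : Finpartition (Finset.univ : Finset (Fin p)) //
    P.parts.card = m ∧ ∀ s ∈ P.parts, r ≤ s.card}

/-!
Labelling the `m` parts of a partition counted by `S_r(p, m)` by `Fin m` identifies
`m! · S_r(p, m)` with the number of maps `Fin p → Fin m` all of whose fibres have at least `r`
points. Every other map has a fibre with fewer than `r` points; there are at most
`m · (∑_{j<r} p^j) · (m - 1)^p = o(m^p)` such maps.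
-/

open Finset Function Filter Topology

namespace Finpartition

variable {α ι : Type*} [Fintype α] [DecidableEq α] (P : Finpartition (univ : Finset α))

def labelling (e : ι ≃ P.parts) (x : α) : ι :=
  e.symm ⟨P.part x, P.part_mem.2 (mem_univ x)⟩

variable {P}

lemma labelling_eq_iff {e : ι ≃ P.parts} {x : α} {i : ι} :
    P.labelling e x = i ↔ x ∈ (e i : Finset α) := by
  rw [labelling, Equiv.symm_apply_eq, Subtype.ext_iff]
  exact P.part_eq_iff_mem (e i).2

lemma labelling_injective : Injective (P.labelling (ι := ι)) := fun e e' h ↦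
  Equiv.ext fun i ↦ Subtype.ext <| Finset.ext fun x ↦ by
    rw [← labelling_eq_iff, ← labelling_eq_iff, h]

lemma labelling_surjective (e : ι ≃ P.parts) : Surjective (P.labelling e) := fun i ↦
  let ⟨x, hx⟩ := P.nonempty_of_mem_parts (e i).2
  ⟨x, labelling_eq_iff.2 hx⟩

end Finpartition

section Fibers

variable {α ι : Type*} [Fintype α] [DecidableEq ι]

def fiber (f : α → ι) (i : ι) : Finset α := {x | f x = i}

@[simp]
lemma mem_fiber {f : α → ι} {i : ι} {x : α} : x ∈ fiber f i ↔ f x = i := by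
  simp [fiber]

def HasFibersAtLeast (r : ℕ) (f : α → ι) : Prop := ∀ i, r ≤ #(fiber f i)

lemma HasFibersAtLeast.surjective {r : ℕ} (hr : 0 < r) {f : α → ι}
    (hf : HasFibersAtLeast r f) : Surjective f := fun i ↦
  let ⟨x, hx⟩ := card_pos.1 (hr.trans_le (hf i))
  ⟨x, mem_fiber.1 hx⟩

lemma fiber_injective {f : α → ι} (hf : Surjective f) : Injective (fiber f) := by
  intro i j h
  obtain ⟨x, rfl⟩ := hf i
  exact mem_fiber.1 (h ▸ mem_fiber.2 rfl)

lemma fiber_labelling [DecidableEq α] {P : Finpartition (univ : Finset α)} (e : ι ≃ P.parts)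
    (i : ι) :
    fiber (P.labelling e) i = e i := by
  ext x
  simp [Finpartition.labelling_eq_iff]

variable [Fintype ι]

instance (r : ℕ) : DecidablePred (HasFibersAtLeast r : (α → ι) → Prop) :=
  fun _ ↦ inferInstanceAs (Decidable (∀ _, _))

variable [DecidableEq α]

def fiberPartition (f : α → ι) (hf : Surjective f) : Finpartition (univ : Finset α) :=
  .ofExistsUnique (univ.image (fiber f)) (fun _ _ ↦ subset_univ _)
    (fun x _ ↦ ⟨fiber f (f x), ⟨mem_image_of_mem _ (mem_univ _), mem_fiber.2 rfl⟩, by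
      rintro t ⟨ht, hxt⟩
      obtain ⟨i, -, rfl⟩ := mem_image.1 ht
      rw [mem_fiber.1 hxt]⟩)
    (fun h ↦ by
      obtain ⟨i, -, hi⟩ := mem_image.1 h
      obtain ⟨x, rfl⟩ := hf i
      simpa [hi] using mem_fiber.2 (rfl : f x = f x))

lemma fiberPartition_parts {f : α → ι} (hf : Surjective f) :
    (fiberPartition f hf).parts = univ.image (fiber f) := rfl

lemma fiberPartition_labelling {P : Finpartition (univ : Finset α)} (e : ι ≃ P.parts) :
    fiberPartition (P.labelling e) (Finpartition.labelling_surjective e) = P := by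
  ext t
  simp only [fiberPartition_parts, fiber_labelling, mem_image, mem_univ, true_and]
  exact ⟨fun ⟨i, hi⟩ ↦ hi ▸ (e i).2, fun ht ↦ ⟨e.symm ⟨t, ht⟩, by simp⟩⟩

lemma exists_labelling_eq {f : α → ι} (hf : Surjective f) :
    ∃ e : ι ≃ (fiberPartition f hf).parts, (fiberPartition f hf).labelling e = f := by
  refine ⟨.ofBijective (fun i ↦ ⟨fiber f i, mem_image_of_mem _ (mem_univ i)⟩)
    ⟨fun i j h ↦ fiber_injective hf (congrArg Subtype.val h), ?_⟩, ?_⟩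
  · rintro ⟨t, ht⟩
    obtain ⟨i, -, rfl⟩ := mem_image.1 ht
    exact ⟨i, rfl⟩
  · funext x
    exact Finpartition.labelling_eq_iff.2 (mem_fiber.2 rfl)

lemma card_hasFibersAtLeast {r : ℕ} (hr : 0 < r) :
    Nat.card {f : α → ι // HasFibersAtLeast r f} = (Fintype.card ι).factorial *
      Nat.card {P : Finpartition (univ : Finset α) //
        #P.parts = Fintype.card ι ∧ ∀ s ∈ P.parts, r ≤ #s} := by
  let Φ (f : {f : α → ι // HasFibersAtLeast r f}) : {P : Finpartition (univ : Finset α) //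
      #P.parts = Fintype.card ι ∧ ∀ s ∈ P.parts, r ≤ #s} :=
    ⟨fiberPartition f.1 (f.2.surjective hr),
      by rw [fiberPartition_parts, card_image_of_injective _ (fiber_injective (f.2.surjective hr)),
        card_univ],
      by simpa [fiberPartition_parts, HasFibersAtLeast] using f.2⟩
  have card_fiber (P) : Nat.card {f // Φ f = P} = (Fintype.card ι).factorial := by
    obtain ⟨P, hcard, hlarge⟩ := P
    let label (e : ι ≃ P.parts) : {f // Φ f = ⟨P, hcard, hlarge⟩} :=
      ⟨⟨P.labelling e, fun i ↦ fiber_labelling e i ▸ hlarge _ (e i).2⟩,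
        Subtype.ext (fiberPartition_labelling e)⟩
    have hlabel : Bijective label := by
      refine ⟨fun e e' h ↦ Finpartition.labelling_injective (congrArg (·.1.1) h), ?_⟩
      rintro ⟨⟨f, hf⟩, hΦ⟩
      obtain rfl : fiberPartition f (hf.surjective hr) = P := congrArg Subtype.val hΦ
      obtain ⟨e, he⟩ := exists_labelling_eq (hf.surjective hr)
      exact ⟨e, by simp only [label, he]⟩
    rw [← Nat.card_congr (Equiv.ofBijective label hlabel), Nat.card_eq_fintype_card,
      Fintype.card_equiv (Fintype.equivOfCardEq (by simpa using hcard.symm))]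
  rw [← Nat.card_congr (Equiv.sigmaFiberEquiv Φ), Nat.card_sigma,
    sum_congr rfl fun P _ ↦ card_fiber P, sum_const, card_univ, smul_eq_mul,
    Nat.card_eq_fintype_card, mul_comm]

end Fibers

section SmallFibers

variable {α ι : Type*} [Fintype α] [DecidableEq α]

lemma card_filter_card_lt_le (r : ℕ) :
    #{s : Finset α | #s < r} ≤ ∑ j ∈ range r, Fintype.card α ^ j :=
  calc #{s : Finset α | #s < r}
      ≤ #((range r).biUnion fun j ↦ powersetCard j (univ : Finset α)) :=
        card_le_card fun s hs ↦ mem_biUnion.2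
          ⟨#s, mem_range.2 (mem_filter.1 hs).2, mem_powersetCard.2 ⟨subset_univ s, rfl⟩⟩
    _ ≤ ∑ j ∈ range r, #(powersetCard j (univ : Finset α)) := card_biUnion_le
    _ ≤ ∑ j ∈ range r, Fintype.card α ^ j := sum_le_sum fun j _ ↦ by
        rw [card_powersetCard, card_univ]
        exact Nat.choose_le_pow _ _

variable [Fintype ι] [DecidableEq ι]

lemma card_filter_card_fiber_lt_le {r : ℕ} (hr : r ≤ Fintype.card α) (i : ι) :
    #{f : α → ι | #(fiber f i) < r} ≤
      #{s : Finset α | #s < r} * (Fintype.card ι - 1) ^ Fintype.card α := by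
  by_cases hι : ∃ j, j ≠ i
  · obtain ⟨j, hj⟩ := hι
    -- `f` is determined by its fibre over `i` and by the map it induces on the complement
    let encode (f : {f : α → ι // #(fiber f i) < r}) :
        {s : Finset α // #s < r} × (α → {j // j ≠ i}) :=
      (⟨fiber f.1 i, f.2⟩, fun x ↦ if h : f.1 x = i then ⟨j, hj⟩ else ⟨f.1 x, h⟩)
    have decode (f) (x : α) :
        (if x ∈ ((encode f).1 : Finset α) then i else ((encode f).2 x : ι)) = f.1 x := by
      by_cases h : f.1 x = i <;> simp [encode, h]
    have hencode : Injective encode := fun f f' h ↦ Subtype.ext <| funext fun x ↦ by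
      rw [← decode f, ← decode f', h]
    have hcompl : Fintype.card {j // j ≠ i} = Fintype.card ι - 1 := by simp
    simpa [← Fintype.card_subtype, hcompl] using Fintype.card_le_of_injective encode hencode
  · push Not at hι
    have hfiber (f : α → ι) : fiber f i = univ := by ext x; simp [hι]
    simp [hfiber, not_lt.2 hr]

lemma card_not_hasFibersAtLeast_le {r : ℕ} (hr : r ≤ Fintype.card α) :
    #{f : α → ι | ¬ HasFibersAtLeast r f} ≤
      Fintype.card ι * (#{s : Finset α | #s < r} * (Fintype.card ι - 1) ^ Fintype.card α) :=
  calc #{f : α → ι | ¬ HasFibersAtLeast r f}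
      ≤ #(univ.biUnion fun i ↦ ({f : α → ι | #(fiber f i) < r} : Finset _)) :=
        card_le_card fun f hf ↦ by simpa [HasFibersAtLeast] using hf
    _ ≤ _ := by
        rw [← card_univ (α := ι)]
        exact card_biUnion_le_card_mul _ _ _ fun i _ ↦ card_filter_card_fiber_lt_le hr i

end SmallFibers

lemma factorial_mul_stirlingAssoc_add_card {r : ℕ} (hr : 0 < r) (p m : ℕ) :
    m.factorial * stirlingAssoc r p m + #{f : Fin p → Fin m | ¬ HasFibersAtLeast r f} =
      m ^ p := by
  have h := card_hasFibersAtLeast (α := Fin p) (ι := Fin m) hr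
  simp only [Fintype.card_fin] at h
  rw [stirlingAssoc, ← h, Nat.card_eq_fintype_card, Fintype.card_subtype,
    card_filter_add_card_filter_not, card_univ, Fintype.card_fun, Fintype.card_fin,
    Fintype.card_fin]

lemma tendsto_card_not_hasFibersAtLeast_div_pow (r : ℕ) {m : ℕ} (hm : 0 < m) :
    Tendsto (fun p ↦ (#{f : Fin p → Fin m | ¬ HasFibersAtLeast r f} : ℝ) / m ^ p)
      atTop (𝓝 0) := by
  set q : ℝ := ((m - 1 : ℕ) : ℝ) / m
  have hq0 : 0 ≤ q := by positivity
  have hq1 : q < 1 := by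
    rw [div_lt_one (by positivity)]
    exact_mod_cast Nat.sub_lt hm one_pos
  have hbound : ∀ᶠ p in atTop,
      (#{f : Fin p → Fin m | ¬ HasFibersAtLeast r f} : ℝ) / m ^ p ≤
        m * ∑ j ∈ range r, (p : ℝ) ^ j * q ^ p := by
    filter_upwards [eventually_ge_atTop r] with p hp
    have h :=
      (card_not_hasFibersAtLeast_le (α := Fin p) (ι := Fin m) (by simpa using hp)).trans
        (Nat.mul_le_mul_left _ (Nat.mul_le_mul_right _ (card_filter_card_lt_le r)))
    simp only [Fintype.card_fin] at h
    rw [div_le_iff₀ (by positivity), ← sum_mul, div_pow, mul_assoc, mul_assoc,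
      div_mul_cancel₀ _ (by positivity)]
    exact_mod_cast h
  have hlim :
      Tendsto (fun p : ℕ ↦ (m : ℝ) * ∑ j ∈ range r, (p : ℝ) ^ j * q ^ p) atTop (𝓝 0) := by
    simpa using (tendsto_finsetSum (range r) fun j _ ↦
      tendsto_pow_const_mul_const_pow_of_lt_one j hq0 hq1).const_mul (m : ℝ)
  exact squeeze_zero' (.of_forall fun p ↦ by positivity) hbound hlim

theorem stmt_13 (m r : ℕ) (hm : 0 < m) (hr : 0 < r) :
    Filter.Tendsto
      (fun p : ℕ => (m.factorial : ℝ) * (stirlingAssoc r p m : ℝ) / (m : ℝ) ^ p)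
      Filter.atTop (nhds 1) := by
  have h := (tendsto_card_not_hasFibersAtLeast_div_pow r hm).const_sub 1
  rw [sub_zero] at h
  refine h.congr fun p ↦ ?_
  have hsum : ((m.factorial * stirlingAssoc r p m : ℕ) : ℝ) +
      #{f : Fin p → Fin m | ¬ HasFibersAtLeast r f} = (m : ℝ) ^ p :=
    mod_cast factorial_mul_stirlingAssoc_add_card hr p m
  have hpow : (m : ℝ) ^ p ≠ 0 := by positivity
  rw [eq_div_iff hpow, sub_mul, one_mul, div_mul_cancel₀ _ hpow, ← hsum]
  push_cast
  ring
end

section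
/- Let m be a positive integer, r an integer with r ≥ 2, and p a natural number with p ≥ r·m. Then S_r(p,m) ≤ p! · r^{2(p−rm)} · (m−1+p−rm)! / (m! · (r!)^m · (p−rm)! · (r−1)^{2(p−rm)} · (m−1)!). -/
open Finset Nat

section FiberCard

variable {α ι : Type*} [Fintype α] [DecidableEq ι]

def fiberCard (f : α → ι) (i : ι) : ℕ := Fintype.card {a // f a = i}

theorem exists_perm_comp_eq_of_fiberCard_eq {f g : α → ι} (h : fiberCard f = fiberCard g) :
    ∃ σ : Equiv.Perm α, f ∘ σ = g :=
  ⟨(Equiv.sigmaFiberEquiv g).symm.trans <| (Equiv.sigmaCongrRight fun i =>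
      (Fintype.equivOfCardEq (congrFun h i)).symm).trans (Equiv.sigmaFiberEquiv f),
    funext fun a => ((Fintype.equivOfCardEq (congrFun h (g a))).symm ⟨a, rfl⟩).prop⟩

variable [Fintype ι]

theorem sum_fiberCard (f : α → ι) : ∑ i, fiberCard f i = Fintype.card α := by
  rw [← Fintype.card_congr (Equiv.sigmaFiberEquiv f), Fintype.card_sigma]
  rfl

variable [DecidableEq α]

theorem card_fiberCard_eq_mul_prod_factorial_le (s : ι → ℕ) :
    #{f : α → ι | fiberCard f = s} * ∏ i, (s i)! ≤ (Fintype.card α)! := by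
  obtain hempty | ⟨b, hb⟩ := (univ.filter fun f : α → ι => fiberCard f = s).eq_empty_or_nonempty
  · simp [hempty]
  rw [mem_filter] at hb
  calc _ ≤ #(univ : Finset (Equiv.Perm α)) * 1 :=
        card_mul_le_card_mul (fun (f : α → ι) (σ : Equiv.Perm α) => b ∘ σ = f) ?_ ?_
    _ = _ := by rw [mul_one, Finset.card_univ, Fintype.card_perm]
  · intro f hf
    rw [mem_filter] at hf
    obtain ⟨σ₀, hσ₀⟩ := exists_perm_comp_eq_of_fiberCard_eq (hb.2.trans hf.2.symm)
    rw [← hb.2]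
    calc ∏ i, (fiberCard b i)! = #{g : Equiv.Perm α | b ∘ g = b} := by
          rw [← Fintype.card_subtype]; exact (DomMulAct.stabilizer_card b).symm
      _ ≤ _ := card_le_card_of_injOn (· * σ₀)
          (fun g hg => by
            simp only [coe_filter, Set.mem_ofPred_eq, mem_univ, true_and] at hg
            simp only [bipartiteAbove, coe_filter, mem_univ, true_and, Set.mem_ofPred_eq,
              Equiv.Perm.coe_mul, ← Function.comp_assoc, hg, hσ₀])
          (fun g _ g' _ h => mul_right_cancel h)
  · intro σ _
    exact card_le_one.2 fun f hf f' hf' => by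
      simp only [bipartiteBelow, mem_filter] at hf hf'
      rw [← hf.2, ← hf'.2]

theorem card_le_fiberCard_mul_pow_factorial_le (r : ℕ) :
    #{f : α → ι | ∀ i, r ≤ fiberCard f i} * r ! ^ Fintype.card ι ≤
      (Fintype.card α)! * #{s ∈ piAntidiag (univ : Finset ι) (Fintype.card α) | ∀ i, r ≤ s i} := by
  rw [card_eq_sum_card_fiberwise (f := fun f : α → ι => fiberCard f)
      (t := {s ∈ piAntidiag (univ : Finset ι) (Fintype.card α) | ∀ i, r ≤ s i}) fun f hf => by
      simpa [mem_piAntidiag, sum_fiberCard] using hf,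
    sum_mul, mul_comm, ← smul_eq_mul, ← sum_const]
  refine sum_le_sum fun s hs => ?_
  rw [mem_filter] at hs
  calc #{f ∈ {f : α → ι | ∀ i, r ≤ fiberCard f i} | fiberCard f = s} * r ! ^ Fintype.card ι
      ≤ #{f : α → ι | fiberCard f = s} * ∏ i, (s i)! := by
        gcongr
        · exact subset_univ _
        · simpa using pow_card_le_prod univ (fun i => (s i)!) r ! fun i _ => factorial_le (hs.2 i)
    _ ≤ _ := card_fiberCard_eq_mul_prod_factorial_le s

end FiberCard

section Compositions

variable {ι : Type*} [Fintype ι] [DecidableEq ι]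

theorem card_piAntidiag_univ (n : ℕ) :
    #(piAntidiag (univ : Finset ι) n) = (Fintype.card ι).multichoose n := by
  rw [← map_sym_eq_piAntidiag, card_map, sym_univ, Finset.card_univ, Sym.card_sym_eq_multichoose]

theorem card_filter_piAntidiag_forall_le_le (r n : ℕ) :
    #{s ∈ piAntidiag (univ : Finset ι) n | ∀ i, r ≤ s i} ≤
      #(piAntidiag (univ : Finset ι) (n - Fintype.card ι * r)) := by
  refine card_le_card_of_injOn (fun s i => s i - r) (fun s hs => ?_) fun s hs s' hs' h => ?_
  · simp only [coe_filter, mem_piAntidiag, Set.mem_ofPred_eq] at hs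
    simp only [mem_coe, mem_piAntidiag, mem_univ, implies_true, and_true]
    rw [sum_tsub_distrib _ fun i _ => hs.2 i, hs.1.1, sum_const, Finset.card_univ, smul_eq_mul]
  · simp only [coe_filter, Set.mem_ofPred_eq] at hs hs'
    funext i
    have hi : s i - r = s' i - r := congrFun h i
    have := hs.2 i
    have := hs'.2 i
    omega

end Compositions

namespace Finpartition

variable {α ι : Type*} [Fintype α] [DecidableEq α] (P : Finpartition (univ : Finset α))

def label (e : P.parts ≃ ι) (a : α) : ι := e ⟨P.part a, P.part_mem.2 (mem_univ a)⟩

theorem label_injective : Function.Injective (P.label (ι := ι)) := by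
  intro e e' h
  ext1 ⟨t, ht⟩
  obtain ⟨a, ha⟩ := P.nonempty_of_mem_parts ht
  have := congrFun h a
  simp only [label, P.part_eq_of_mem ht ha] at this
  exact this

variable [DecidableEq ι]

theorem filter_label_eq (e : P.parts ≃ ι) (i : ι) :
    ({a | P.label e a = i} : Finset α) = e.symm i := by
  ext a
  rw [mem_filter, label, ← Equiv.eq_symm_apply, Subtype.ext_iff,
    P.part_eq_iff_mem (e.symm i).2]
  simp

theorem fiberCard_label (e : P.parts ≃ ι) (i : ι) :
    fiberCard (P.label e) i = #(e.symm i : Finset α) := by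
  rw [fiberCard, Fintype.card_subtype, filter_label_eq]

variable [Fintype ι]

theorem parts_eq_image_filter_label (e : P.parts ≃ ι) :
    P.parts = univ.image fun i => ({a | P.label e a = i} : Finset α) := by
  ext t
  simp only [filter_label_eq, mem_image, mem_univ, true_and]
  exact ⟨fun ht => ⟨e ⟨t, ht⟩, by simp⟩, by rintro ⟨i, rfl⟩; exact (e.symm i).2⟩

end Finpartition

theorem card_finpartition_mul_factorial_le {α ι : Type*} [Fintype α] [DecidableEq α]
    [Fintype ι] [DecidableEq ι] (r : ℕ) :
    Nat.card {P : Finpartition (univ : Finset α) //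
        #P.parts = Fintype.card ι ∧ ∀ t ∈ P.parts, r ≤ #t} * (Fintype.card ι)! ≤
      #{f : α → ι | ∀ i, r ≤ fiberCard f i} := by
  set S := {P : Finpartition (univ : Finset α) //
    #P.parts = Fintype.card ι ∧ ∀ t ∈ P.parts, r ≤ #t}
  let e (P : S) : P.1.parts ≃ ι :=
    Fintype.equivOfCardEq (α := P.1.parts) ((Fintype.card_coe _).trans P.2.1)
  let Φ (x : S × Equiv.Perm ι) : {f : α → ι // ∀ i, r ≤ fiberCard f i} :=
    ⟨x.1.1.label ((e x.1).trans x.2), fun i => by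
      rw [Finpartition.fiberCard_label]; exact x.1.2.2 _ (Subtype.prop _)⟩
  have hΦ : Function.Injective Φ := by
    rintro ⟨P, π⟩ ⟨P', π'⟩ h
    have hlabel := congrArg Subtype.val h
    obtain rfl : P = P' := Subtype.ext <| Finpartition.ext <| by
      rw [P.1.parts_eq_image_filter_label ((e P).trans π),
        P'.1.parts_eq_image_filter_label ((e P').trans π')]
      exact congrArg (fun f : α → ι => univ.image fun i => ({a | f a = i} : Finset α)) hlabel
    have hπ := P.1.label_injective hlabel
    congr
    exact Equiv.ext fun i => by simpa using Equiv.congr_fun hπ ((e P).symm i)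
  calc Nat.card S * (Fintype.card ι)! = Nat.card (S × Equiv.Perm ι) := by
        rw [Nat.card_prod, Nat.card_perm, Nat.card_eq_fintype_card (α := ι)]
    _ ≤ Nat.card {f : α → ι // ∀ i, r ≤ fiberCard f i} := Nat.card_le_card_of_injective Φ hΦ
    _ = _ := by rw [Nat.card_eq_fintype_card, Fintype.card_subtype]

theorem stirlingAssoc_mul_factorial_mul_pow_le (r p m : ℕ) :
    stirlingAssoc r p m * m ! * r ! ^ m ≤ p ! * m.multichoose (p - r * m) := by
  have hlabel := card_finpartition_mul_factorial_le (α := Fin p) (ι := Fin m) r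
  have hcount := card_le_fiberCard_mul_pow_factorial_le (α := Fin p) (ι := Fin m) r
  have hcomp := card_filter_piAntidiag_forall_le_le (ι := Fin m) r p
  simp only [Fintype.card_fin, card_piAntidiag_univ] at hlabel hcount hcomp
  calc stirlingAssoc r p m * m ! * r ! ^ m ≤ _ := Nat.mul_le_mul_right _ hlabel
    _ ≤ _ := hcount
    _ ≤ _ := Nat.mul_le_mul_left _ (by convert hcomp using 3; exact Nat.mul_comm r m)

theorem stmt_19_general (m : ℕ) (r : ℕ) (hr : 2 ≤ r) (p : ℕ) :
    (stirlingAssoc r p m : ℝ) ≤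
      (p.factorial : ℝ) * (r : ℝ) ^ (2 * (p - r * m)) *
          ((m - 1 + (p - r * m)).factorial : ℝ) /
        ((m.factorial : ℝ) * (r.factorial : ℝ) ^ m * ((p - r * m).factorial : ℝ) *
          ((r : ℝ) - 1) ^ (2 * (p - r * m)) * ((m - 1).factorial : ℝ)) := by
  set n := p - r * m
  have hkey : stirlingAssoc r p m * m ! * r ! ^ m ≤ p ! * (m - 1 + n).choose n :=
    (stirlingAssoc_mul_factorial_mul_pow_le r p m).trans <| by
      rw [multichoose_eq]; gcongr; omega
  have hr1 : (0 : ℝ) < r - 1 := by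
    have : (2 : ℝ) ≤ r := by exact_mod_cast hr
    linarith
  rw [le_div_iff₀ (by positivity)]
  calc (stirlingAssoc r p m : ℝ) * (m ! * r ! ^ m * n ! * (r - 1) ^ (2 * n) * (m - 1)!)
      = (stirlingAssoc r p m * m ! * r ! ^ m : ℕ) * ((m - 1)! * n ! : ℕ) * (r - 1) ^ (2 * n) := by
        push_cast; ring
    _ ≤ (p ! * (m - 1 + n).choose n : ℕ) * ((m - 1)! * n ! : ℕ) * (r : ℝ) ^ (2 * n) := by
        gcongr
        linarith
    _ = p ! * r ^ (2 * n) * (m - 1 + n)! := by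
        rw [← add_choose_mul_factorial_mul_factorial]; push_cast; ring

theorem stmt_19 (m : ℕ) (hm : 0 < m) (r : ℕ) (hr : 2 ≤ r) (p : ℕ) (hp : r * m ≤ p) :
    (stirlingAssoc r p m : ℝ) ≤
      (p.factorial : ℝ) * (r : ℝ) ^ (2 * (p - r * m)) *
          ((m - 1 + (p - r * m)).factorial : ℝ) /
        ((m.factorial : ℝ) * (r.factorial : ℝ) ^ m * ((p - r * m).factorial : ℝ) *
          ((r : ℝ) - 1) ^ (2 * (p - r * m)) * ((m - 1).factorial : ℝ)) :=
  stmt_19_general m r hr p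
end
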